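/- arXiv:1903.04414 — 5 statements merged into one kernel-verified Lean document; each statement's English description precedes it below -/
import Mathlib

section
/- Let s* ∈ Fin K be a server with m_{s*} ≥ m_l for every l ∈ Fin K and m_{s*} > 0. Then Σ_{c ∈ 𝒞, s* ∈ c} Σ_{l ∈ c} n_c / m_l ≥ d. -/
open Finset

/-- The redundancy-d key estimate: for a most-loaded server `sstar` with a positive
number of copies, the total fluid departure rate of copies from `sstar` under PS/ROS
with i.i.d. copies is at least `d`. -/
theorem redundancy_maxServer_rate_ge (K d : ℕ) (hd : 1 ≤ d) (hdK : d ≤ K)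
    (n : Finset (Fin K) → ℝ) (hn : ∀ c, 0 ≤ n c)
    (m : Fin K → ℝ)
    (hm : ∀ s : Fin K,
      m s = ∑ c ∈ Finset.univ.filter (fun c : Finset (Fin K) => c.card = d ∧ s ∈ c), n c)
    (sstar : Fin K) (hmax : ∀ l : Fin K, m l ≤ m sstar) (hpos : 0 < m sstar) :
    (d : ℝ) ≤
      ∑ c ∈ Finset.univ.filter (fun c : Finset (Fin K) => c.card = d ∧ sstar ∈ c),
        ∑ l ∈ c, n c / m l := by
  have hnm : ∀ (c : Finset (Fin K)) (l : Fin K), c.card = d → l ∈ c → n c ≤ m l := by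
    intro c l hc hl
    rw [hm l]
    exact Finset.single_le_sum (fun i _ => hn i)
      (by simp [Finset.mem_filter, hc, hl])
  have key : ∀ (c : Finset (Fin K)) (l : Fin K), c.card = d → l ∈ c →
      n c / m sstar ≤ n c / m l := by
    intro c l hc hl
    rcases eq_or_lt_of_le (le_trans (hn c) (hnm c l hc hl)) with h0 | h0
    · have : n c = 0 := le_antisymm (by rw [h0]; exact hnm c l hc hl) (hn c)
      simp [this]
    · exact div_le_div_of_nonneg_left (hn c) h0 (hmax l)
  calc (d : ℝ) = (∑ c ∈ Finset.univ.filter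
        (fun c : Finset (Fin K) => c.card = d ∧ sstar ∈ c), n c) / m sstar * d := by
        rw [← hm sstar, div_self (ne_of_gt hpos), one_mul]
    _ = ∑ c ∈ Finset.univ.filter
        (fun c : Finset (Fin K) => c.card = d ∧ sstar ∈ c), ∑ l ∈ c, n c / m sstar := by
        rw [Finset.sum_div, Finset.sum_mul]
        refine Finset.sum_congr rfl fun c hc => ?_
        rw [Finset.sum_const, nsmul_eq_mul, (Finset.mem_filter.mp hc).2.1, mul_comm]
    _ ≤ _ := by
        refine Finset.sum_le_sum fun c hc => Finset.sum_le_sum fun l hl => ?_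
        exact key c l (Finset.mem_filter.mp hc).2.1 hl
end

section
/- Let s0 ∈ Fin K be a server with m_{s0} ≤ m_l for every l ∈ Fin K and m_{s0} > 0. Then Σ_{c ∈ 𝒞, s0 ∈ c} n_c / (min_{l ∈ c} m_l) = 1, where for each c the minimum is taken over the (nonempty, finite) set of servers l ∈ c. -/
open Finset

/-- In the lower-bound system for PS with identical copies, the total departure rate
of copies from a globally least-loaded server `s0` (with a positive number of copies)
equals exactly `1` (in units of `μ`): the sum over types `c` containing `s0` of
`n c` divided by the minimum of `m` over the servers in `c` equals `1`. -/
theorem redundancy_minServer_rate_eq_one (K d : ℕ) (hd : 1 ≤ d) (hdK : d ≤ K)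
    (n : Finset (Fin K) → ℝ) (hn : ∀ c, 0 ≤ n c)
    (m : Fin K → ℝ)
    (hm : ∀ s : Fin K,
      m s = ∑ c ∈ Finset.univ.filter (fun c : Finset (Fin K) => c.card = d ∧ s ∈ c), n c)
    (s0 : Fin K) (hmin : ∀ l : Fin K, m s0 ≤ m l) (hpos : 0 < m s0) :
    ∑ c ∈ (Finset.univ.filter (fun c : Finset (Fin K) => c.card = d ∧ s0 ∈ c)).attach,
      n c.1 / (c.1.inf' ⟨s0, ((Finset.mem_filter.mp c.2).2).2⟩ m) = 1 := by
  have key : ∀ c : {x // x ∈ Finset.univ.filter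
      (fun c : Finset (Fin K) => c.card = d ∧ s0 ∈ c)},
      c.1.inf' ⟨s0, ((Finset.mem_filter.mp c.2).2).2⟩ m = m s0 := by
    intro c
    have hs0 : s0 ∈ c.1 := ((Finset.mem_filter.mp c.2).2).2
    apply le_antisymm (Finset.inf'_le _ hs0)
    exact Finset.le_inf' _ _ (fun l _ => hmin l)
  calc ∑ c ∈ (Finset.univ.filter (fun c : Finset (Fin K) => c.card = d ∧ s0 ∈ c)).attach,
        n c.1 / (c.1.inf' ⟨s0, ((Finset.mem_filter.mp c.2).2).2⟩ m)
      = ∑ c ∈ (Finset.univ.filter (fun c : Finset (Fin K) => c.card = d ∧ s0 ∈ c)).attach,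
        n c.1 / m s0 := by
        refine Finset.sum_congr rfl fun c _ => ?_
        rw [key c]
    _ = (∑ c ∈ Finset.univ.filter (fun c : Finset (Fin K) => c.card = d ∧ s0 ∈ c), n c) / m s0 := by
        rw [← Finset.sum_div, Finset.sum_attach]
    _ = 1 := by rw [← hm s0]; exact div_self hpos.ne'
end

section
/- Fix s ∈ Fin K with m_s > 0 and assume m_l > 0 for every l ∈ Fin K. For each c ∈ 𝒞 with s ∈ c, let σ(c) ∈ c be a server attaining min_{l ∈ c} m_l. Then Σ_{c ∈ 𝒞, s ∈ c} n_c / m_{σ(c)} = 1 + Σ_{l ∈ Fin K} ((m_s − m_l)/(m_s · m_l)) · (Σ_{c ∈ 𝒞, s ∈ c, σ(c) = l} n_c). (Since σ(c) ∈ c and s ∈ c imply m_{σ(c)} ≤ m_s, only servers l with m_l ≤ m_s contribute, so the right-hand sum equals the paper's sum over D_s(n) = {l : m_l ≤ m_s}.) -/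
open Finset

/-- Lemma 6.1 of the paper: in the lower-bound system for PS with identical copies,
when every server has a positive number of copies, the departure rate of copies from
server `s` equals `1 + ∑_l ((m s − m l)/(m s · m l)) · (∑_{c : σ c = l} n c)`,
where `σ c` is a server attaining the minimum of `m` over the servers in `c`. -/
theorem redundancy_lowerBound_server_rate (K d : ℕ) (hd : 1 ≤ d) (hdK : d ≤ K)
    (n : Finset (Fin K) → ℝ) (hn : ∀ c, 0 ≤ n c)
    (m : Fin K → ℝ)
    (hm : ∀ s : Fin K,
      m s = ∑ c ∈ Finset.univ.filter (fun c : Finset (Fin K) => c.card = d ∧ s ∈ c), n c)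
    (s : Fin K) (hs : 0 < m s) (hall : ∀ l : Fin K, 0 < m l)
    (σ : Finset (Fin K) → Fin K)
    (hσmem : ∀ c : Finset (Fin K), c.card = d → s ∈ c → σ c ∈ c)
    (hσmin : ∀ c : Finset (Fin K), c.card = d → s ∈ c → ∀ l ∈ c, m (σ c) ≤ m l) :
    ∑ c ∈ Finset.univ.filter (fun c : Finset (Fin K) => c.card = d ∧ s ∈ c),
        n c / m (σ c)
      = 1 + ∑ l : Fin K, ((m s - m l) / (m s * m l)) *
          ∑ c ∈ Finset.univ.filter
              (fun c : Finset (Fin K) => c.card = d ∧ s ∈ c ∧ σ c = l), n c := by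
  set F := Finset.univ.filter (fun c : Finset (Fin K) => c.card = d ∧ s ∈ c) with hF
  have hfib : ∀ l : Fin K,
      Finset.univ.filter (fun c : Finset (Fin K) => c.card = d ∧ s ∈ c ∧ σ c = l)
        = F.filter (fun c => σ c = l) := by
    intro l
    simp [hF, Finset.filter_filter, and_assoc]
  have step1 : ∀ l : Fin K,
      ((m s - m l) / (m s * m l)) *
        ∑ c ∈ Finset.univ.filter
            (fun c : Finset (Fin K) => c.card = d ∧ s ∈ c ∧ σ c = l), n c
      = ∑ c ∈ F.filter (fun c => σ c = l),
          ((m s - m (σ c)) / (m s * m (σ c))) * n c := by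
    intro l
    rw [hfib l, Finset.mul_sum]
    refine Finset.sum_congr rfl ?_
    intro c hc
    rw [Finset.mem_filter] at hc
    rw [hc.2]
  have step2 :
      ∑ l : Fin K, ∑ c ∈ F.filter (fun c => σ c = l),
          ((m s - m (σ c)) / (m s * m (σ c))) * n c
        = ∑ c ∈ F, ((m s - m (σ c)) / (m s * m (σ c))) * n c :=
    Finset.sum_fiberwise F σ _
  have h1 : (1 : ℝ) = ∑ c ∈ F, n c / m s := by
    rw [← Finset.sum_div, ← hm s, div_self hs.ne']
  calc ∑ c ∈ F, n c / m (σ c)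
      = ∑ c ∈ F, (n c / m s + ((m s - m (σ c)) / (m s * m (σ c))) * n c) := by
        refine Finset.sum_congr rfl ?_
        intro c hc
        rw [hF, Finset.mem_filter] at hc
        have hσ := hall (σ c)
        field_simp
        ring
    _ = 1 + ∑ l : Fin K, ((m s - m l) / (m s * m l)) *
          ∑ c ∈ Finset.univ.filter
              (fun c : Finset (Fin K) => c.card = d ∧ s ∈ c ∧ σ c = l), n c := by
        rw [Finset.sum_add_distrib, ← h1]
        congr 1
        rw [← step2]
        exact Finset.sum_congr rfl fun l _ => (step1 l).symm
end

section
/- For all reals b > 0 and b1 > 0, the function t ↦ D_PS(t; b, b1) − b is integrable on ℝ and ∫_ℝ (D_PS(t; b, b1) − b) dt = b · b1. -/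
open MeasureTheory

/-- The conditional sojourn time under Processor Sharing of a tagged job of size `b`
arriving at time `0`, given exactly one other job of the same type with size `b1`
arriving at time `t`. This is the (equivalent, boundary-consistent) closed form of the
piecewise definition in Appendix E of the paper:
`D_PS(t) = b + min (b1 + t) b` on `[-b1, 0]`, `D_PS(t) = b + min b1 (b - t)` on
`[0, b]`, and `D_PS(t) = b` elsewhere. -/
noncomputable def DPS (b b1 t : ℝ) : ℝ :=
  if t ≤ -b1 then b
  else if t ≤ 0 then b + min (b1 + t) b
  else if t ≤ b then b + min b1 (b - t)
  else b

lemma int_const_add (c a₁ a₂ : ℝ) :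
    ∫ t in a₁..a₂, (c + t) = c * (a₂ - a₁) + (a₂ ^ 2 - a₁ ^ 2) / 2 := by
  rw [intervalIntegral.integral_add intervalIntegrable_const
    (continuous_id'.intervalIntegrable _ _)]
  simp [integral_id, mul_comm]

lemma int_const_sub (c a₁ a₂ : ℝ) :
    ∫ t in a₁..a₂, (c - t) = c * (a₂ - a₁) - (a₂ ^ 2 - a₁ ^ 2) / 2 := by
  rw [intervalIntegral.integral_sub intervalIntegrable_const
    (continuous_id'.intervalIntegrable _ _)]
  simp [integral_id, mul_comm]

set_option maxHeartbeats 1000000 in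
/-- The first light-traffic derivative computation for PS in Appendix E of the paper:
`∫_ℝ (D_PS(t; b, b1) − b) dt = b · b1`. -/
theorem integral_DPS_sub (b b1 : ℝ) (hb : 0 < b) (hb1 : 0 < b1) :
    Integrable (fun t : ℝ => DPS b b1 t - b) ∧
    ∫ t : ℝ, (DPS b b1 t - b) = b * b1 := by
  set g : ℝ → ℝ := fun t => max (min (min b b1) (min (b - t) (b1 + t))) 0 with hg
  have heq : (fun t : ℝ => DPS b b1 t - b) = g := by
    funext t
    simp only [DPS, hg]
    split_ifs <;> (simp only [min_def, max_def]; split_ifs <;> linarith)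
  have hcont : Continuous g := by
    apply Continuous.max _ continuous_const
    exact Continuous.min continuous_const
      ((continuous_const.sub continuous_id).min (continuous_const.add continuous_id))
  have hzero : ∀ x : ℝ, x ∉ Set.Ioc (-b1) b → g x = 0 := by
    intro x hx
    simp only [Set.mem_Ioc, not_and_or, not_lt, not_le] at hx
    apply max_eq_right
    rcases hx with h | h
    · exact le_trans (min_le_right _ _) (le_trans (min_le_right _ _) (by linarith))
    · exact le_trans (min_le_right _ _) (le_trans (min_le_left _ _) (by linarith))
  have hcs : HasCompactSupport g := by
    apply HasCompactSupport.intro (isCompact_Icc (a := -b1) (b := b))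
    intro x hx
    apply hzero
    intro hmem
    exact hx ⟨le_of_lt hmem.1, hmem.2⟩
  have hint : Integrable g := hcont.integrable_of_hasCompactSupport hcs
  rw [heq]
  refine ⟨hint, ?_⟩
  have hsupp : Function.support g ⊆ Set.Ioc (-b1) b := by
    intro x hx
    by_contra h
    exact hx (hzero x h)
  rw [← intervalIntegral.integral_eq_integral_of_support_subset hsupp]
  have hii : ∀ a c : ℝ, IntervalIntegrable g volume a c :=
    fun a c => hint.intervalIntegrable
  rcases le_total b b1 with hc | hc
  · -- b ≤ b1 : split at b - b1 and 0
    rw [← intervalIntegral.integral_add_adjacent_intervals (b := 0) (hii _ _) (hii _ _),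
        ← intervalIntegral.integral_add_adjacent_intervals (a := -b1) (b := b - b1) (hii _ _) (hii _ _)]
    have h1 : ∫ t in (-b1)..(b - b1), g t = ∫ t in (-b1)..(b - b1), (b1 + t) := by
      apply intervalIntegral.integral_congr
      intro t ht
      rw [Set.uIcc_of_le (by linarith)] at ht
      simp only [hg, min_def, max_def]
      split_ifs <;> (cases ht; linarith)
    have h2 : ∫ t in (b - b1)..0, g t = ∫ t in (b - b1)..0, (b : ℝ) := by
      apply intervalIntegral.integral_congr
      intro t ht
      rw [Set.uIcc_of_le (by linarith)] at ht
      simp only [hg, min_def, max_def]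
      split_ifs <;> (cases ht; linarith)
    have h3 : ∫ t in (0:ℝ)..b, g t = ∫ t in (0:ℝ)..b, (b - t) := by
      apply intervalIntegral.integral_congr
      intro t ht
      rw [Set.uIcc_of_le (by linarith)] at ht
      simp only [hg, min_def, max_def]
      split_ifs <;> (cases ht; linarith)
    rw [h1, h2, h3, int_const_add, int_const_sub, intervalIntegral.integral_const,
        smul_eq_mul]
    ring
  · -- b1 ≤ b : split at 0 and b - b1
    rw [← intervalIntegral.integral_add_adjacent_intervals (b := 0) (hii _ _) (hii _ _),
        ← intervalIntegral.integral_add_adjacent_intervals (a := 0) (b := b - b1) (hii _ _) (hii _ _)]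
    have h1 : ∫ t in (-b1)..0, g t = ∫ t in (-b1)..0, (b1 + t) := by
      apply intervalIntegral.integral_congr
      intro t ht
      rw [Set.uIcc_of_le (by linarith)] at ht
      simp only [hg, min_def, max_def]
      split_ifs <;> (cases ht; linarith)
    have h2 : ∫ t in (0:ℝ)..(b - b1), g t = ∫ t in (0:ℝ)..(b - b1), (b1 : ℝ) := by
      apply intervalIntegral.integral_congr
      intro t ht
      rw [Set.uIcc_of_le (by linarith)] at ht
      simp only [hg, min_def, max_def]
      split_ifs <;> (cases ht; linarith)
    have h3 : ∫ t in (b - b1)..b, g t = ∫ t in (b - b1)..b, (b - t) := by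
      apply intervalIntegral.integral_congr
      intro t ht
      rw [Set.uIcc_of_le (by linarith)] at ht
      simp only [hg, min_def, max_def]
      split_ifs <;> (cases ht; linarith)
    rw [h1, h2, h3, int_const_add, int_const_sub, intervalIntegral.integral_const,
        smul_eq_mul]
    ring
end

section
/- Define h : (0,1) → ℝ by h(ρ) = ρ − 4(2 − ρ)(3 − 2ρ)/(ρ² − 8ρ + 12). Then: (i) ρ² − 8ρ + 12 > 0 for all ρ ∈ (0,1); (ii) for all ρ ∈ (0,1), h(ρ) < 0 if and only if ρ³ − 16ρ² + 40ρ − 24 < 0; (iii) the cubic ρ ↦ ρ³ − 16ρ² + 40ρ − 24 is strictly increasing on [0,1]; and consequently (iv) there exists a unique ρ* ∈ (0.9, 0.92) such that h(ρ) < 0 for all ρ ∈ (0, ρ*) and h(ρ) > 0 for all ρ ∈ (ρ*, 1). -/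
/-!
Over the positive denominator `ρ² − 8ρ + 12 = (2 − ρ)(6 − ρ)`, the drift is the cubic
`ρ³ − 16ρ² + 40ρ − 24` divided by that denominator, so both have the same sign on `(0, 1)`.
The cubic is strictly increasing for `ρ ≤ 1`, and it changes sign between `0.9` and `0.92`;
its root there is the threshold, which is unique because two sign-change points of one
function cannot differ.
-/

open Set

noncomputable def drift (ρ : ℝ) : ℝ :=
  ρ - 4 * (2 - ρ) * (3 - 2 * ρ) / (ρ ^ 2 - 8 * ρ + 12)

def driftCubic (ρ : ℝ) : ℝ :=
  ρ ^ 3 - 16 * ρ ^ 2 + 40 * ρ - 24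

lemma drift_denom_pos {ρ : ℝ} (hρ : ρ < 2) : 0 < ρ ^ 2 - 8 * ρ + 12 := by
  nlinarith

lemma drift_eq_driftCubic_div {ρ : ℝ} (hρ : ρ < 2) :
    drift ρ = driftCubic ρ / (ρ ^ 2 - 8 * ρ + 12) := by
  have hden := (drift_denom_pos hρ).ne'
  unfold drift driftCubic
  rw [eq_div_iff hden, sub_mul, div_mul_cancel₀ _ hden]
  ring

lemma drift_neg_iff {ρ : ℝ} (hρ : ρ < 2) : drift ρ < 0 ↔ driftCubic ρ < 0 := by
  rw [drift_eq_driftCubic_div hρ, div_lt_iff₀ (drift_denom_pos hρ), zero_mul]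

lemma drift_pos_iff {ρ : ℝ} (hρ : ρ < 2) : 0 < drift ρ ↔ 0 < driftCubic ρ := by
  rw [drift_eq_driftCubic_div hρ, div_pos_iff_of_pos_right (drift_denom_pos hρ)]

lemma driftCubic_strictMonoOn : StrictMonoOn driftCubic (Iic 1) := by
  intro x hx y hy hxy
  have hx : x ≤ 1 := hx
  have hy : y ≤ 1 := hy
  -- `x² + xy + y² ≥ 0` and `x + y ≤ 2`, so the factor is at least `8`.
  have hfactor : 0 < x ^ 2 + x * y + y ^ 2 - 16 * (x + y) + 40 := by
    nlinarith [sq_nonneg (x + y), sq_nonneg x, sq_nonneg y]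
  have hdiff : driftCubic y - driftCubic x
      = (y - x) * (x ^ 2 + x * y + y ^ 2 - 16 * (x + y) + 40) := by
    unfold driftCubic; ring
  nlinarith [mul_pos (sub_pos.2 hxy) hfactor]

lemma exists_driftCubic_eq_zero : ∃ r ∈ Ioo (0.9 : ℝ) 0.92, driftCubic r = 0 := by
  have hcont : ContinuousOn driftCubic (Icc (0.9 : ℝ) 0.92) := by
    unfold driftCubic; fun_prop
  exact intermediate_value_Ioo (by norm_num) hcont ⟨by norm_num [driftCubic], by norm_num [driftCubic]⟩

lemma le_of_neg_of_pos {g : ℝ → ℝ} {a b s t : ℝ} (has : a ≤ s) (htb : t ≤ b)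
    (hneg : ∀ x, a < x → x < t → g x < 0) (hpos : ∀ x, s < x → x < b → 0 < g x) :
    t ≤ s := by
  by_contra! hst
  have hm_neg := hneg ((s + t) / 2) (by linarith) (by linarith)
  have hm_pos := hpos ((s + t) / 2) (by linarith) (by linarith)
  linarith

/-- Example 4.1 of the paper: analysis of the drift
`h(ρ) = ρ − 4(2 − ρ)(3 − 2ρ)/(ρ² − 8ρ + 12)` of the number of type-`{2,3}` jobs.
(i) The denominator is positive on `(0,1)`; (ii) on `(0,1)`, `h(ρ) < 0` iff
`ρ³ − 16ρ² + 40ρ − 24 < 0`; (iii) the cubic is strictly increasing on `[0,1]`;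
(iv) there is a unique threshold `ρ* ∈ (0.9, 0.92)` with `h < 0` on `(0, ρ*)` and
`h > 0` on `(ρ*, 1)`. -/
theorem priority_example_drift_threshold :
    (∀ ρ : ℝ, 0 < ρ → ρ < 1 → 0 < ρ ^ 2 - 8 * ρ + 12) ∧
    (∀ ρ : ℝ, 0 < ρ → ρ < 1 →
      (ρ - 4 * (2 - ρ) * (3 - 2 * ρ) / (ρ ^ 2 - 8 * ρ + 12) < 0 ↔
        ρ ^ 3 - 16 * ρ ^ 2 + 40 * ρ - 24 < 0)) ∧
    StrictMonoOn (fun ρ : ℝ => ρ ^ 3 - 16 * ρ ^ 2 + 40 * ρ - 24) (Set.Icc 0 1) ∧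
    (∃! ρstar : ℝ, ρstar ∈ Set.Ioo (0.9 : ℝ) 0.92 ∧
      (∀ ρ : ℝ, 0 < ρ → ρ < ρstar →
        ρ - 4 * (2 - ρ) * (3 - 2 * ρ) / (ρ ^ 2 - 8 * ρ + 12) < 0) ∧
      (∀ ρ : ℝ, ρstar < ρ → ρ < 1 →
        0 < ρ - 4 * (2 - ρ) * (3 - 2 * ρ) / (ρ ^ 2 - 8 * ρ + 12))) := by
  have hmono := driftCubic_strictMonoOn
  obtain ⟨r, ⟨hr9, hr92⟩, hroot⟩ := exists_driftCubic_eq_zero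
  have hr1 : r ≤ 1 := by linarith
  have hneg (ρ : ℝ) (hρr : ρ < r) : drift ρ < 0 := by
    rw [drift_neg_iff (by linarith), ← hroot]
    exact hmono (show ρ ≤ 1 by linarith) hr1 hρr
  have hpos (ρ : ℝ) (hrρ : r < ρ) (hρ1 : ρ < 1) : 0 < drift ρ := by
    rw [drift_pos_iff (by linarith), ← hroot]
    exact hmono hr1 hρ1.le hrρ
  refine ⟨fun ρ _ hρ1 => drift_denom_pos (by linarith),
    fun ρ _ hρ1 => drift_neg_iff (by linarith),
    hmono.mono Icc_subset_Iic_self,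
    ⟨r, ⟨⟨hr9, hr92⟩, fun ρ _ => hneg ρ, hpos⟩, ?_⟩⟩
  rintro s ⟨⟨hs9, hs92⟩, hs_neg, hs_pos⟩
  exact le_antisymm
    (le_of_neg_of_pos (by linarith) (by linarith) hs_neg fun ρ => hpos ρ)
    (le_of_neg_of_pos (by linarith) (by linarith) (fun ρ _ => hneg ρ) hs_pos)
end
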